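/- Let Γ_ℓ, T_ℓ be as above and let ψ̂ be a smooth nonnegative function on B that, together with M, vanishes appropriately on ∂B (M ∈ W^{1,1}_0(B), M ≥ 0). Then for each i, the truncated stress component 𝕋_i^ℓ(Mψ̂) := ∫_B M(q) ∇_{q_i} T_ℓ(ψ̂(q)) ⊗ q_i dq satisfies the pointwise bound |𝕋_i^ℓ(Mψ̂)| ≤ C ℓ, where C depends only on B and ‖M‖_{W^{1,1}(B)} (in particular C is independent of ψ̂). -/

import Mathlib

open MeasureTheory

open Measure Bornology Set Module in
lemma oneD {U : Set ℝ} (hUo : IsOpen U) (hUb : IsBounded U)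
    {g g' : ℝ → ℝ} (hgc : Continuous g) (hg0 : ∀ t, t ∉ U → g t = 0)
    (hder : ∀ t ∈ U, HasDerivAt g (g' t) t)
    (hint : IntegrableOn g' U volume) :
    ∫ t in U, g' t = 0 := by
  classical
  obtain ⟨R, hR⟩ := isBounded_iff_forall_norm_le.mp hUb
  set a : ℝ → ℝ := fun x => sSup (Set.Iic x ∩ Uᶜ) with ha
  set b : ℝ → ℝ := fun x => sInf (Set.Ici x ∩ Uᶜ) with hb
  have hamem : ∀ x ∈ U, a x ∈ Set.Iic x ∩ Uᶜ := by
    intro x hx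
    refine (isClosed_Iic.inter hUo.isClosed_compl).csSup_mem ⟨-(R+1), ?_, ?_⟩
      ⟨x, fun y hy => hy.1⟩
    · have := hR x hx
      have : -R ≤ x := by
        have := abs_le.mp (by simpa using this)
        linarith [this.1]
      simp only [Set.mem_Iic]; linarith
    · intro h
      have := hR _ h
      have hR0 : 0 ≤ R := le_trans (norm_nonneg x) (hR x hx)
      rw [Real.norm_eq_abs, abs_of_nonpos (by linarith)] at this
      linarith
  have hbmem : ∀ x ∈ U, b x ∈ Set.Ici x ∩ Uᶜ := by
    intro x hx
    refine (isClosed_Ici.inter hUo.isClosed_compl).csInf_mem ⟨R+1, ?_, ?_⟩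
      ⟨x, fun y hy => hy.1⟩
    · have := hR x hx
      have : x ≤ R := by
        have := abs_le.mp (by simpa using this)
        linarith [this.2]
      simp only [Set.mem_Ici]; linarith
    · intro h
      have := hR _ h
      have hR0 : 0 ≤ R := le_trans (norm_nonneg x) (hR x hx)
      rw [Real.norm_eq_abs, abs_of_nonneg (by linarith)] at this
      linarith
  have halt : ∀ x ∈ U, a x < x := by
    intro x hx
    rcases (hamem x hx) with ⟨h1, h2⟩
    rcases lt_or_eq_of_le (Set.mem_Iic.mp h1) with h | h
    · exact h
    · exact absurd hx (by rwa [h] at h2)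
  have hblt : ∀ x ∈ U, x < b x := by
    intro x hx
    rcases (hbmem x hx) with ⟨h1, h2⟩
    rcases lt_or_eq_of_le (Set.mem_Ici.mp h1) with h | h
    · exact h
    · exact absurd hx (by rwa [← h] at h2)
  have claim1 : ∀ x ∈ U, Set.Ioo (a x) (b x) ⊆ U := by
    intro x hx y hy
    by_contra hyU
    rcases le_total y x with h | h
    · have : y ≤ a x := le_csSup ⟨x, fun z hz => hz.1⟩ ⟨h, hyU⟩
      exact absurd hy.1 (not_lt.mpr this)
    · have : b x ≤ y := csInf_le ⟨x, fun z hz => hz.1⟩ ⟨h, hyU⟩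
      exact absurd hy.2 (not_lt.mpr this)
  have claim2 : ∀ x ∈ U, ∀ z ∈ Set.Ioo (a x) (b x), a z = a x ∧ b z = b x := by
    intro x hx z hz
    have hzU : z ∈ U := claim1 x hx hz
    constructor
    · refine le_antisymm ?_ ?_
      · by_contra h
        push_neg at h
        have haz := hamem z hzU
        have : a z ∈ Set.Ioo (a x) (b x) :=
          ⟨h, lt_of_le_of_lt (Set.mem_Iic.mp haz.1) hz.2⟩
        exact haz.2 (claim1 x hx this)
      · exact le_csSup ⟨z, fun w hw => hw.1⟩ ⟨le_of_lt hz.1, (hamem x hx).2⟩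
    · refine le_antisymm ?_ ?_
      · exact csInf_le ⟨z, fun w hw => hw.1⟩ ⟨le_of_lt hz.2, (hbmem x hx).2⟩
      · by_contra h
        push_neg at h
        have hbz := hbmem z hzU
        have : b z ∈ Set.Ioo (a x) (b x) :=
          ⟨lt_of_lt_of_le hz.1 (Set.mem_Ici.mp hbz.1), h⟩
        exact hbz.2 (claim1 x hx this)
  set S : Set (ℝ × ℝ) := (fun x => (a x, b x)) '' U with hS
  -- countability
  have hSmem : ∀ p ∈ S, ∃ x ∈ U, p = (a x, b x) := by
    intro p hp
    rcases hp with ⟨x, hx, hpx⟩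
    exact ⟨x, hx, hpx.symm⟩
  have hSIoo : ∀ p ∈ S, ∀ z ∈ Set.Ioo p.1 p.2, (a z, b z) = p := by
    rintro p hp z hz
    obtain ⟨x, hx, rfl⟩ := hSmem p hp
    have := claim2 x hx z hz
    simp [this.1, this.2]
  have hSc : S.Countable := by
    have hch : ∀ p : S, ∃ q : ℚ, (q : ℝ) ∈ Set.Ioo p.1.1 p.1.2 := by
      rintro ⟨p, hp⟩
      obtain ⟨x, hx, rfl⟩ := hSmem p hp
      obtain ⟨q, hq⟩ := exists_rat_btwn (lt_trans (halt x hx) (hblt x hx))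
      exact ⟨q, hq⟩
    choose f hf using hch
    have hfinj : Function.Injective f := by
      rintro p p' hpp
      have h1 : ((f p : ℚ) : ℝ) ∈ Set.Ioo p.1.1 p.1.2 := hf p
      have h2 : ((f p : ℚ) : ℝ) ∈ Set.Ioo p'.1.1 p'.1.2 := hpp ▸ hf p'
      have e1 := hSIoo p.1 p.2 _ h1
      have e2 := hSIoo p'.1 p'.2 _ h2
      exact Subtype.ext (e1 ▸ e2)
    exact Set.countable_coe_iff.mp hfinj.countable
  have hScoe : Countable ↥S := hSc.to_subtype
  have hUeq : U = ⋃ p : S, Set.Ioo p.1.1 p.1.2 := by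
    ext y
    constructor
    · intro hy
      exact Set.mem_iUnion.mpr ⟨⟨(a y, b y), ⟨y, hy, rfl⟩⟩, ⟨halt y hy, hblt y hy⟩⟩
    · intro hy
      obtain ⟨⟨p, hp⟩, hyp⟩ := Set.mem_iUnion.mp hy
      obtain ⟨x, hx, rfl⟩ := hSmem p hp
      exact claim1 x hx hyp
  have hmeas : ∀ p : S, MeasurableSet (Set.Ioo p.1.1 p.1.2) := fun p => measurableSet_Ioo
  have hdisj : Pairwise (Function.onFun Disjoint fun p : S => Set.Ioo p.1.1 p.1.2) := by
    rintro p p' hne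
    rw [Function.onFun, Set.disjoint_left]
    intro z hz hz'
    have e1 := hSIoo p.1 p.2 z hz
    have e2 := hSIoo p'.1 p'.2 z hz'
    exact hne (Subtype.ext (e1 ▸ e2))
  have hintU : IntegrableOn g' (⋃ p : S, Set.Ioo p.1.1 p.1.2) volume := hUeq ▸ hint
  have hzero : ∀ p : S, ∫ t in Set.Ioo p.1.1 p.1.2, g' t = 0 := by
    rintro ⟨p, hp⟩
    obtain ⟨x, hx, rfl⟩ := hSmem p hp
    have hab : a x < b x := lt_trans (halt x hx) (hblt x hx)
    have hii : IntervalIntegrable g' volume (a x) (b x) := by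
      rw [intervalIntegrable_iff_integrableOn_Ioo_of_le hab.le]
      exact hint.mono_set (claim1 x hx)
    have hftc := intervalIntegral.integral_eq_sub_of_hasDeriv_right_of_le hab.le
      (hgc.continuousOn)
      (fun t ht => (hder t (claim1 x hx ht)).hasDerivWithinAt) hii
    have : ∫ t in Set.Ioo (a x) (b x), g' t = ∫ t in (a x)..(b x), g' t := by
      rw [intervalIntegral.integral_of_le hab.le, integral_Ioc_eq_integral_Ioo]
    rw [this, hftc, hg0 _ (hamem x hx).2, hg0 _ (hbmem x hx).2, sub_zero]
  calc ∫ t in U, g' t = ∫ t in (⋃ p : S, Set.Ioo p.1.1 p.1.2), g' t := by rw [← hUeq]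
    _ = ∑' p : S, ∫ t in Set.Ioo p.1.1 p.1.2, g' t :=
        integral_iUnion hmeas hdisj hintU
    _ = 0 := by simp [hzero]

open Measure Bornology Set Module in
lemma key1 {E : Type*} [NormedAddCommGroup E] [MeasurableSpace E] [BorelSpace E]
    [SecondCountableTopology E]
    (μ : Measure E) [SigmaFinite μ]
    {B : Set (E × ℝ)} (hBo : IsOpen B) (hBb : IsBounded B)
    {F F' : E × ℝ → ℝ} (hFc : Continuous F) (hF0 : ∀ p, p ∉ B → F p = 0)
    (hF : ∀ p ∈ B, HasDerivAt (fun t => F (p.1, t)) (F' p) p.2)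
    (hFi : IntegrableOn F' B (μ.prod volume)) :
    ∫ p in B, F' p ∂(μ.prod volume) = 0 := by
  have hBm : MeasurableSet B := hBo.measurableSet
  have hind : Integrable (B.indicator F') (μ.prod volume) :=
    (integrable_indicator_iff hBm).2 hFi
  rw [← integral_indicator hBm, integral_prod _ hind]
  have hmain : ∀ᵐ x ∂μ, (∫ t, B.indicator F' (x, t)) = 0 := by
    filter_upwards [hind.prod_right_ae] with x hx
    set U : Set ℝ := {t | (x, t) ∈ B} with hU
    have hUo' : IsOpen U := hBo.preimage (Continuous.prodMk_right x)
    have hUm : MeasurableSet U := hUo'.measurableSet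
    have hUb : IsBounded U := by
      have : U ⊆ Prod.snd '' B := fun t ht => ⟨(x, t), ht, rfl⟩
      exact (LipschitzWith.prod_snd.isBounded_image hBb).subset this
    have hindslice : (fun t => B.indicator F' (x, t)) = U.indicator (fun t => F' (x, t)) := by
      funext t
      by_cases h : (x, t) ∈ B <;> simp [Set.indicator, h, hU]
    have hslice : IntegrableOn (fun t => F' (x, t)) U volume := by
      rw [← integrable_indicator_iff hUm, ← hindslice]
      exact hx
    rw [hindslice, integral_indicator hUm]
    exact oneD hUo' hUb (hFc.comp (Continuous.prodMk_right x))
      (fun t ht => hF0 (x, t) ht)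
      (fun t ht => hF (x, t) ht) hslice
  rw [integral_congr_ae hmain, integral_zero]

open Measure Bornology Set Module in
lemma key2 {E : Type*} [NormedAddCommGroup E] [NormedSpace ℝ E] [MeasurableSpace E]
    [BorelSpace E] [FiniteDimensional ℝ E]
    (μ : Measure (E × ℝ)) [μ.IsAddHaarMeasure]
    {B : Set (E × ℝ)} (hBo : IsOpen B) (hBb : IsBounded B)
    {F F' : E × ℝ → ℝ} (hFc : Continuous F) (hF0 : ∀ p, p ∉ B → F p = 0)
    (hF : ∀ p ∈ B, HasDerivAt (fun t => F (p.1, t)) (F' p) p.2)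
    (hFi : IntegrableOn F' B μ) :
    ∫ p in B, F' p ∂μ = 0 := by
  let ν : Measure E := addHaar
  have A : ν.prod volume = (addHaarScalarFactor (ν.prod volume) μ) • μ :=
    isAddLeftInvariant_eq_smul _ _
  have A' : μ = (addHaarScalarFactor μ (ν.prod volume)) • (ν.prod volume) :=
    isAddLeftInvariant_eq_smul _ _
  have hFi' : IntegrableOn F' B (ν.prod volume) := by
    rw [IntegrableOn, A, ENNReal.smul_def, Measure.restrict_smul]
    exact hFi.smul_measure (by simp)
  have h0 : ∫ p in B, F' p ∂(ν.prod volume) = 0 := key1 ν hBo hBb hFc hF0 hF hFi'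
  calc ∫ p in B, F' p ∂μ
      = ∫ p in B, F' p ∂((addHaarScalarFactor μ (ν.prod volume)) • (ν.prod volume)) := by
        rw [← A']
    _ = 0 := by
        rw [ENNReal.smul_def, Measure.restrict_smul, integral_smul_measure, h0, smul_zero]

open Measure Bornology Set Module in
lemma key3 {E : Type*} [NormedAddCommGroup E] [NormedSpace ℝ E] [MeasurableSpace E]
    [BorelSpace E] [FiniteDimensional ℝ E]
    (μ : Measure E) [μ.IsAddHaarMeasure]
    {B : Set E} (hBo : IsOpen B) (hBb : IsBounded B)
    {F F' : E → ℝ} (hFc : Continuous F) (hF0 : ∀ x, x ∉ B → F x = 0)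
    {v : E}
    (hF : ∀ x ∈ B, HasDerivAt (fun t : ℝ => F (x + t • v)) (F' x) 0)
    (hFi : IntegrableOn F' B μ) :
    ∫ x in B, F' x ∂μ = 0 := by
  rcases eq_or_ne v 0 with rfl | hv
  · have hz : EqOn F' (fun _ => (0:ℝ)) B := by
      intro x hx
      have h2 : HasDerivAt (fun t : ℝ => F (x + t • (0:E))) 0 0 := by
        simpa using hasDerivAt_const (0:ℝ) (F x)
      exact (hF x hx).unique h2
    rw [setIntegral_congr_fun hBo.measurableSet hz, integral_zero]
  · have : Nontrivial E := ⟨⟨v, 0, hv⟩⟩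
    set n := finrank ℝ E with hn
    obtain ⟨L, hL⟩ : ∃ L : E ≃L[ℝ] ((Fin (n-1) → ℝ) × ℝ), L v = (0, 1) := by
      have hfr : finrank ℝ ((Fin (n-1) → ℝ) × ℝ) = n := by
        simp only [finrank_prod, finrank_pi, Fintype.card_fin, finrank_self]
        exact Nat.sub_add_cancel finrank_pos
      have L₀ : E ≃L[ℝ] ((Fin (n-1) → ℝ) × ℝ) := (ContinuousLinearEquiv.ofFinrankEq hfr).symm
      obtain ⟨Mm, hM⟩ : ∃ Mm : ((Fin (n-1) → ℝ) × ℝ) ≃L[ℝ] ((Fin (n-1) → ℝ) × ℝ),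
          Mm (L₀ v) = (0, 1) := by
        apply SeparatingDual.exists_continuousLinearEquiv_apply_eq
        · simpa using hv
        · simp
      exact ⟨L₀.trans Mm, by simp [hM]⟩
    have L_emb : MeasurableEmbedding L := L.toHomeomorph.measurableEmbedding
    set ν : Measure ((Fin (n-1) → ℝ) × ℝ) := Measure.map L μ with hν
    have : IsAddHaarMeasure ν := L.isAddHaarMeasure_map μ
    set B' : Set ((Fin (n-1) → ℝ) × ℝ) := L.symm ⁻¹' B with hB'
    have hB'o : IsOpen B' := hBo.preimage L.symm.continuous
    have hB'pre : ⇑L ⁻¹' B' = B := by ext y; simp [hB']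
    have hB'm : MeasurableSet B' := hB'o.measurableSet
    have hB'b : IsBounded B' := by
      have himg : B' = ⇑L '' B := by
        ext y
        simp only [hB', Set.mem_preimage, Set.mem_image]
        constructor
        · intro h; exact ⟨L.symm y, h, by simp⟩
        · rintro ⟨x, hx, rfl⟩; simpa using hx
      rw [himg]
      exact (L : E →L[ℝ] (Fin (n-1) → ℝ) × ℝ).lipschitz.isBounded_image hBb
    have hrm : ν.restrict B' = Measure.map L (μ.restrict B) := by
      rw [hν, Measure.restrict_map L_emb.measurable hB'm, hB'pre]
    have hFi' : IntegrableOn (fun y => F' (L.symm y)) B' ν := by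
      rw [IntegrableOn, hrm, L_emb.integrable_map_iff]
      simp only [Function.comp_def, L.symm_apply_apply]
      exact hFi
    have hder : ∀ p ∈ B', HasDerivAt (fun t => (fun y => F (L.symm y)) (p.1, t))
        ((fun y => F' (L.symm y)) p) p.2 := by
      intro p hp
      have hz : L.symm p ∈ B := hp
      have hfun : ∀ t : ℝ, L.symm (p.1, t) = L.symm p + (t - p.2) • v := by
        intro t
        rw [ContinuousLinearEquiv.symm_apply_eq, _root_.map_add, _root_.map_smul, hL,
          L.apply_symm_apply]
        refine Prod.ext ?_ ?_ |>.symm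
        · simp
        · simp [Prod.smul_def]
      have h0 : HasDerivAt (fun s : ℝ => F (L.symm p + s • v)) (F' (L.symm p)) 0 :=
        hF (L.symm p) hz
      have hshift : HasDerivAt (fun t : ℝ => t - p.2) 1 p.2 :=
        (hasDerivAt_id p.2).sub_const p.2
      have hcomp : HasDerivAt ((fun s : ℝ => F (L.symm p + s • v)) ∘ (fun t : ℝ => t - p.2))
          (F' (L.symm p) * 1) p.2 :=
        HasDerivAt.comp p.2 (by simpa using h0) hshift
      have : (fun s : ℝ => F (L.symm p + s • v)) ∘ (fun t : ℝ => t - p.2)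
          = fun t => F (L.symm (p.1, t)) := by
        funext t; simp [Function.comp, hfun t]
      rw [this] at hcomp
      simpa using hcomp
    have h2 := key2 ν hB'o hB'b (hFc.comp L.symm.continuous)
      (fun p hp => hF0 _ hp) hder hFi'
    calc ∫ x in B, F' x ∂μ
        = ∫ y in B', F' (L.symm y) ∂ν := by
          rw [hrm, L_emb.integral_map]
          simp
      _ = 0 := h2

open Measure Bornology Set Module in
set_option maxHeartbeats 1000000 in
/-- Bound |𝕋_i^ℓ(Mψ̂)| ≤ C ℓ for the truncated stress components, with C depending
only on B and the W^{1,1}-data of M (in particular independent of ψ̂ and ℓ). -/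
theorem truncated_stress_bound {K : ℕ}
    (B : Set (EuclideanSpace ℝ (Fin K × Fin 3))) (hBo : IsOpen B)
    (hBb : Bornology.IsBounded B)
    (M : EuclideanSpace ℝ (Fin K × Fin 3) → ℝ)
    (hMnn : ∀ q, 0 ≤ M q)
    (hMc : ContinuousOn M (closure B))
    (hM0 : ∀ q ∈ frontier B, M q = 0)
    (hMd : DifferentiableOn ℝ M B)
    (hMint : IntegrableOn M B volume)
    (hMdint : IntegrableOn (fun q => ‖fderiv ℝ M q‖) B volume)
    (Γ : ℝ → ℝ) (hΓs : ContDiff ℝ (⊤ : ℕ∞) Γ)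
    (hΓ01 : ∀ s, Γ s ∈ Set.Icc (0:ℝ) 1)
    (hΓsupp : Function.support Γ ⊆ Set.Ioo (-2) 2)
    (hΓ1 : ∀ s ∈ Set.Icc (-1:ℝ) 1, Γ s = 1) :
    ∃ C > (0:ℝ), ∀ ℓ : ℕ, 1 ≤ ℓ →
      ∀ ψ : EuclideanSpace ℝ (Fin K × Fin 3) → ℝ,
        ContDiff ℝ (⊤ : ℕ∞) ψ → (∀ q, 0 ≤ ψ q) →
        ∀ (i : Fin K) (α β : Fin 3),
          |∫ q in B, M q *
              (fderiv ℝ (fun p => ∫ r in (0:ℝ)..(ψ p), Γ (r / ℓ)) q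
                (EuclideanSpace.single (i, α) (1:ℝ))) *
              (EuclideanSpace.proj (i, β) q)| ≤ C * ℓ := by
  classical
  obtain ⟨R₀, hR₀⟩ := isBounded_iff_forall_norm_le.mp hBb
  set R := max R₀ 0 with hR
  have hRnn : (0:ℝ) ≤ R := le_max_right _ _
  have hRb : ∀ q ∈ B, ‖q‖ ≤ R := fun q hq => le_trans (hR₀ q hq) (le_max_left _ _)
  set I1 := ∫ q in B, ‖fderiv ℝ M q‖ with hI1
  set I2 := ∫ q in B, M q with hI2
  have hI1nn : (0:ℝ) ≤ I1 := integral_nonneg fun q => norm_nonneg _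
  have hI2nn : (0:ℝ) ≤ I2 := integral_nonneg fun q => hMnn q
  refine ⟨2*(R+1)*(I1+I2) + 1, by nlinarith, ?_⟩
  intro ℓ hℓ ψ hψ hψnn i α β
  have hℓ1 : (1:ℝ) ≤ (ℓ:ℝ) := by exact_mod_cast hℓ
  have hℓpos : (0:ℝ) < (ℓ:ℝ) := lt_of_lt_of_le one_pos hℓ1
  set e : EuclideanSpace ℝ (Fin K × Fin 3) := EuclideanSpace.single (i, α) (1:ℝ) with he
  set u : EuclideanSpace ℝ (Fin K × Fin 3) → ℝ :=
    fun p => ∫ r in (0:ℝ)..(ψ p), Γ (r / ℓ) with hu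
  have hΓc : Continuous fun r : ℝ => Γ (r / (ℓ:ℝ)) :=
    hΓs.continuous.comp (continuous_id.div_const _)
  have hT : ∀ s : ℝ, HasDerivAt (fun s => ∫ r in (0:ℝ)..s, Γ (r / ℓ)) (Γ (s / ℓ)) s :=
    fun s => (hΓc.integral_hasStrictDerivAt 0 s).hasDerivAt
  have hψd : ∀ p, HasFDerivAt ψ (fderiv ℝ ψ p) p :=
    fun p => (hψ.differentiable (by simp) p).hasFDerivAt
  have hud : ∀ p, HasFDerivAt u ((Γ (ψ p / ℓ)) • fderiv ℝ ψ p) p :=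
    fun p => (hT (ψ p)).comp_hasFDerivAt p (hψd p)
  have huc : Continuous u := by
    rw [continuous_iff_continuousAt]
    exact fun p => (hud p).continuousAt
  -- bound on u
  have hubd : ∀ p, |u p| ≤ 2 * ℓ := by
    intro p
    have h0s : (0:ℝ) ≤ ψ p := hψnn p
    have hnn : 0 ≤ u p := intervalIntegral.integral_nonneg h0s (fun r _ => (hΓ01 _).1)
    rw [abs_of_nonneg hnn]
    by_cases hcase : ψ p ≤ 2 * ℓ
    · have hb1 : u p ≤ ∫ r in (0:ℝ)..(ψ p), (1:ℝ) :=
        intervalIntegral.integral_mono_on h0s (hΓc.intervalIntegrable _ _)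
          intervalIntegrable_const (fun r _ => (hΓ01 _).2)
      simpa using hb1.trans (by simpa using hcase)
    · push_neg at hcase
      have hsplit : u p = (∫ r in (0:ℝ)..(2*(ℓ:ℝ)), Γ (r/ℓ))
          + ∫ r in (2*(ℓ:ℝ))..(ψ p), Γ (r/ℓ) :=
        (intervalIntegral.integral_add_adjacent_intervals (hΓc.intervalIntegrable _ _)
          (hΓc.intervalIntegrable _ _)).symm
      have hzero : (∫ r in (2*(ℓ:ℝ))..(ψ p), Γ (r/ℓ)) = 0 := by
        have hz : ∀ r ∈ Set.uIcc (2*(ℓ:ℝ)) (ψ p), Γ (r/ℓ) = 0 := by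
          intro r hr
          rw [Set.uIcc_of_le hcase.le] at hr
          have h2 : (2:ℝ) ≤ r / ℓ := by
            rw [le_div_iff₀ hℓpos]; linarith [hr.1]
          by_contra hne
          exact absurd (hΓsupp (Function.mem_support.mpr hne)).2 (not_lt.mpr h2)
        calc (∫ r in (2*(ℓ:ℝ))..(ψ p), Γ (r/ℓ)) = ∫ r in (2*(ℓ:ℝ))..(ψ p), (0:ℝ) :=
              intervalIntegral.integral_congr hz
          _ = 0 := by simp
      have hb1 : (∫ r in (0:ℝ)..(2*(ℓ:ℝ)), Γ (r/ℓ)) ≤ ∫ r in (0:ℝ)..(2*(ℓ:ℝ)), (1:ℝ) :=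
        intervalIntegral.integral_mono_on (by positivity) (hΓc.intervalIntegrable _ _)
          intervalIntegrable_const (fun r _ => (hΓ01 _).2)
      rw [hsplit, hzero, add_zero]
      simpa using hb1
  -- projection bounds
  have hproj : ∀ q : EuclideanSpace ℝ (Fin K × Fin 3), |EuclideanSpace.proj (i, β) q| ≤ ‖q‖ := by
    intro q
    have h2 := abs_real_inner_le_norm (EuclideanSpace.single (i,β) (1:ℝ)) q
    rw [EuclideanSpace.inner_single_left, EuclideanSpace.norm_single] at h2
    simpa using h2
  have hprojB : ∀ q ∈ B, |EuclideanSpace.proj (i, β) q| ≤ R :=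
    fun q hq => le_trans (hproj q) (hRb q hq)
  have hprojE : |EuclideanSpace.proj (i, β) e| ≤ 1 := le_trans (hproj e) (by
    rw [he, EuclideanSpace.norm_single]; simp)
  have hnorme : ‖e‖ = 1 := by rw [he, EuclideanSpace.norm_single]; simp
  -- M extension
  set Mext : EuclideanSpace ℝ (Fin K × Fin 3) → ℝ := (closure B).piecewise M (fun _ => 0)
    with hMextdef
  have hMextc : Continuous Mext := by
    apply continuous_piecewise
    · exact fun a ha => hM0 a (frontier_closure_subset ha)
    · rwa [closure_closure]
    · exact continuousOn_const
  have hMexteq : ∀ q ∈ B, Mext q = M q :=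
    fun q hq => Set.piecewise_eq_of_mem _ _ _ (subset_closure hq)
  have hMext0 : ∀ q, q ∉ B → Mext q = 0 := by
    intro q hq
    by_cases h : q ∈ closure B
    · have hfr : q ∈ frontier B := ⟨h, by rwa [hBo.interior_eq]⟩
      exact (Set.piecewise_eq_of_mem _ _ _ h).trans (hM0 q hfr)
    · exact Set.piecewise_eq_of_notMem _ _ _ h
  -- F, F'
  set F : EuclideanSpace ℝ (Fin K × Fin 3) → ℝ :=
    fun q => Mext q * (u q * EuclideanSpace.proj (i, β) q) with hFdef
  set g1 : EuclideanSpace ℝ (Fin K × Fin 3) → ℝ :=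
    fun q => (fderiv ℝ M q e) * (u q * EuclideanSpace.proj (i, β) q) with hg1def
  set g2 : EuclideanSpace ℝ (Fin K × Fin 3) → ℝ :=
    fun q => M q * ((fderiv ℝ u q e) * EuclideanSpace.proj (i, β) q) with hg2def
  set g3 : EuclideanSpace ℝ (Fin K × Fin 3) → ℝ :=
    fun q => M q * (u q * EuclideanSpace.proj (i, β) e) with hg3def
  set F' : EuclideanSpace ℝ (Fin K × Fin 3) → ℝ := fun q => g1 q + g2 q + g3 q with hF'def
  have hFc : Continuous F :=
    hMextc.mul (huc.mul (EuclideanSpace.proj (i, β)).continuous)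
  have hF0 : ∀ q, q ∉ B → F q = 0 := by
    intro q hq; rw [hFdef]; simp [hMext0 q hq]
  -- derivative of F along e on B
  have hFder : ∀ x ∈ B, HasDerivAt (fun t : ℝ => F (x + t • e)) (F' x) 0 := by
    intro x hx
    have hMx : HasFDerivAt M (fderiv ℝ M x) x :=
      (hMd.differentiableAt (hBo.mem_nhds hx)).hasFDerivAt
    have hux : HasFDerivAt u (fderiv ℝ u x) x := (hud x).differentiableAt.hasFDerivAt
    have hπ := ContinuousLinearMap.hasFDerivAt (x := x)
      (EuclideanSpace.proj (i, β) : EuclideanSpace ℝ (Fin K × Fin 3) →L[ℝ] ℝ)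
    have h1 := hux.mul hπ
    have hG := hMx.mul h1
    have hGl := hG.hasLineDerivAt e
    have hGd : HasDerivAt (fun t : ℝ =>
        M (x + t • e) * (u (x + t • e) * EuclideanSpace.proj (i, β) (x + t • e))) (F' x) 0 := by
      have := hGl
      rw [HasLineDerivAt] at this
      convert this using 1
      case e'_4 => rfl
      case e'_5 => rfl
      case e'_8 => rfl
      rw [hF'def, hg1def, hg2def, hg3def]
      simp only [ContinuousLinearMap.add_apply, ContinuousLinearMap.smul_apply,
        smul_eq_mul, Pi.mul_apply]
      ring
    apply hGd.congr_of_eventuallyEq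
    have hcont : Continuous (fun t : ℝ => x + t • e) := by continuity
    have hev : ∀ᶠ t in nhds (0:ℝ), x + t • e ∈ B := by
      have hcA : Filter.Tendsto (fun t : ℝ => x + t • e) (nhds 0) (nhds x) := by
        have := hcont.continuousAt (x := (0:ℝ))
        simpa [ContinuousAt] using this
      exact hcA (hBo.mem_nhds hx)
    filter_upwards [hev] with t ht
    rw [hFdef]
    simp [hMexteq _ ht]
  -- integrability
  have hKcl : IsCompact (closure B) := hBb.isCompact_closure
  have hfduc : Continuous (fun q => fderiv ℝ u q e) := by
    have : (fun q => fderiv ℝ u q e) = fun q => Γ (ψ q / ℓ) * (fderiv ℝ ψ q e) := by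
      funext q
      rw [(hud q).fderiv]
      simp
    rw [this]
    exact (hΓs.continuous.comp ((hψ.continuous).div_const _)).mul
      ((hψ.continuous_fderiv (by simp)).clm_apply continuous_const)
  have hg1i : IntegrableOn g1 B volume := by
    apply Integrable.mono' (hMdint.mul_const (2 * (ℓ:ℝ) * R))
    · exact ((measurable_fderiv_apply_const ℝ M e).aestronglyMeasurable).mul
        ((huc.mul (EuclideanSpace.proj (i, β)).continuous).aestronglyMeasurable)
    · filter_upwards [ae_restrict_mem hBo.measurableSet] with q hq
      have h1 : |fderiv ℝ M q e| ≤ ‖fderiv ℝ M q‖ := by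
        calc |fderiv ℝ M q e| = ‖fderiv ℝ M q e‖ := rfl
          _ ≤ ‖fderiv ℝ M q‖ * ‖e‖ := (fderiv ℝ M q).le_opNorm e
          _ = ‖fderiv ℝ M q‖ := by rw [hnorme, mul_one]
      have h2 : |u q * EuclideanSpace.proj (i, β) q| ≤ 2 * (ℓ:ℝ) * R := by
        rw [abs_mul]
        exact mul_le_mul (hubd q) (hprojB q hq) (abs_nonneg _) (by positivity)
      calc ‖g1 q‖ = |fderiv ℝ M q e| * |u q * EuclideanSpace.proj (i, β) q| := by
            rw [hg1def]; simp [abs_mul]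
        _ ≤ ‖fderiv ℝ M q‖ * (2 * (ℓ:ℝ) * R) := by
            apply mul_le_mul h1 h2 (abs_nonneg _) (norm_nonneg _)
  have hbdd_cont : ∀ (φ : EuclideanSpace ℝ (Fin K × Fin 3) → ℝ), Continuous φ →
      IntegrableOn (fun q => M q * φ q) B volume := by
    intro φ hφ
    obtain ⟨Cφ, hCφ⟩ := hKcl.exists_bound_of_continuousOn hφ.continuousOn
    apply Integrable.mono' (hMint.mul_const (max Cφ 0))
    · exact (hMint.aestronglyMeasurable.mul (hφ.aestronglyMeasurable.restrict))
    · filter_upwards [ae_restrict_mem hBo.measurableSet] with q hq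
      have h1 : ‖φ q‖ ≤ max Cφ 0 := le_trans (hCφ q (subset_closure hq)) (le_max_left _ _)
      calc ‖M q * φ q‖ = M q * ‖φ q‖ := by
            rw [norm_mul]; rw [Real.norm_eq_abs (M q), abs_of_nonneg (hMnn q)]
        _ ≤ M q * max Cφ 0 := mul_le_mul_of_nonneg_left h1 (hMnn q)
  have hg2i : IntegrableOn g2 B volume :=
    hbdd_cont _ (hfduc.mul (EuclideanSpace.proj (i, β)).continuous)
  have hg3i : IntegrableOn g3 B volume :=
    hbdd_cont _ (huc.mul continuous_const)
  have hFi : IntegrableOn F' B volume := (hg1i.add hg2i).add hg3i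
  -- apply the divergence lemma
  have hzero : ∫ q in B, F' q = 0 := key3 volume hBo hBb hFc hF0 hFder hFi
  have hsplit : ∫ q in B, F' q = (∫ q in B, g1 q) + (∫ q in B, g2 q) + (∫ q in B, g3 q) := by
    have h12 : (∫ q in B, (g1 q + g2 q)) = (∫ q in B, g1 q) + (∫ q in B, g2 q) :=
      integral_add hg1i hg2i
    have h123 : (∫ q in B, (g1 q + g2 q + g3 q))
        = (∫ q in B, (g1 q + g2 q)) + (∫ q in B, g3 q) :=
      integral_add (hg1i.add hg2i) hg3i
    calc ∫ q in B, F' q = ∫ q in B, (g1 q + g2 q + g3 q) := rfl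
      _ = (∫ q in B, (g1 q + g2 q)) + (∫ q in B, g3 q) := h123
      _ = (∫ q in B, g1 q) + (∫ q in B, g2 q) + (∫ q in B, g3 q) := by rw [h12]
  have hg2val : ∫ q in B, g2 q = -((∫ q in B, g1 q) + (∫ q in B, g3 q)) := by
    rw [hsplit] at hzero; linarith
  -- bounds on integrals
  have hb1 : |∫ q in B, g1 q| ≤ I1 * (2 * (ℓ:ℝ) * R) := by
    have h1 : |∫ q in B, g1 q| ≤ ∫ q in B, |g1 q| := by
      simpa [Real.norm_eq_abs] using norm_integral_le_integral_norm (μ := volume.restrict B) g1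
    refine h1.trans ?_
    rw [hI1, ← integral_mul_const]
    apply setIntegral_mono_on hg1i.abs (hMdint.mul_const _) hBo.measurableSet
    intro q hq
    have h1 : |fderiv ℝ M q e| ≤ ‖fderiv ℝ M q‖ := by
      calc |fderiv ℝ M q e| = ‖fderiv ℝ M q e‖ := rfl
        _ ≤ ‖fderiv ℝ M q‖ * ‖e‖ := (fderiv ℝ M q).le_opNorm e
        _ = ‖fderiv ℝ M q‖ := by rw [hnorme, mul_one]
    have h2 : |u q * EuclideanSpace.proj (i, β) q| ≤ 2 * (ℓ:ℝ) * R := by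
      rw [abs_mul]
      apply mul_le_mul (hubd q) (hprojB q hq) (abs_nonneg _) (by positivity)
    calc |g1 q| = |fderiv ℝ M q e| * |u q * EuclideanSpace.proj (i, β) q| := by
          rw [hg1def]; simp [abs_mul]
      _ ≤ ‖fderiv ℝ M q‖ * (2 * (ℓ:ℝ) * R) :=
          mul_le_mul h1 h2 (abs_nonneg _) (norm_nonneg _)
  have hb3 : |∫ q in B, g3 q| ≤ I2 * (2 * (ℓ:ℝ)) := by
    have h1 : |∫ q in B, g3 q| ≤ ∫ q in B, |g3 q| := by
      simpa [Real.norm_eq_abs] using norm_integral_le_integral_norm (μ := volume.restrict B) g3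
    refine h1.trans ?_
    rw [hI2, ← integral_mul_const]
    apply setIntegral_mono_on hg3i.abs (hMint.mul_const _) hBo.measurableSet
    intro q hq
    calc |g3 q| = |M q| * (|u q| * |EuclideanSpace.proj (i, β) e|) := by
          rw [hg3def]; simp [abs_mul]
      _ ≤ M q * (2 * (ℓ:ℝ) * 1) := by
          rw [abs_of_nonneg (hMnn q)]
          apply mul_le_mul_of_nonneg_left _ (hMnn q)
          apply mul_le_mul (hubd q) hprojE (abs_nonneg _) (by positivity)
      _ = M q * (2 * (ℓ:ℝ)) := by ring
  -- final
  have htarget : (∫ q in B, M q *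
      (fderiv ℝ (fun p => ∫ r in (0:ℝ)..(ψ p), Γ (r / ℓ)) q
        (EuclideanSpace.single (i, α) (1:ℝ))) *
      (EuclideanSpace.proj (i, β) q)) = ∫ q in B, g2 q := by
    apply integral_congr_ae
    filter_upwards with q
    rw [hg2def]
    show M q * (fderiv ℝ u q e) * (EuclideanSpace.proj (i, β) q)
        = M q * ((fderiv ℝ u q e) * EuclideanSpace.proj (i, β) q)
    ring
  rw [htarget, hg2val, abs_neg]
  calc |(∫ q in B, g1 q) + (∫ q in B, g3 q)| ≤ |∫ q in B, g1 q| + |∫ q in B, g3 q| :=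
        abs_add_le _ _
    _ ≤ I1 * (2 * (ℓ:ℝ) * R) + I2 * (2 * (ℓ:ℝ)) := add_le_add hb1 hb3
    _ ≤ (2*(R+1)*(I1+I2) + 1) * ℓ := by
        nlinarith [mul_nonneg (mul_nonneg hRnn hI2nn) hℓpos.le,
          mul_nonneg hI1nn hℓpos.le, mul_nonneg hI2nn hℓpos.le,
          mul_nonneg (mul_nonneg hRnn hI1nn) hℓpos.le, hℓpos.le]
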